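/- For all π, ρ, σ ∈ W, the coefficient of δ_e in μ_π(∂_ρ(δ_σ)) equals 1 if σ = π⁻¹ρ and ℓ(σ) = ℓ(π) + ℓ(ρ), and equals 0 otherwise. -/
import Mathlib


open CoxeterSystem
open scoped Classical

/-- The martial operator `μ_s`: `μ_s δ_w = δ_{s w}` if `ℓ(s w) < ℓ(w)`, else `0`. -/
noncomputable def martial {B W : Type*} [Group W] (M : CoxeterMatrix B)
    (cs : CoxeterSystem M W) (i : B) : Module.End ℤ (W →₀ ℤ) :=
  Finsupp.lsum ℤ fun w =>
    if cs.length (cs.simple i * w) < cs.length w then Finsupp.lsingle (cs.simple i * w) else 0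

/-- The divided difference operator `∂_s`: `∂_s δ_w = δ_{w s}` if `ℓ(w s) < ℓ(w)`, else `0`. -/
noncomputable def partial' {B W : Type*} [Group W] (M : CoxeterMatrix B)
    (cs : CoxeterSystem M W) (i : B) : Module.End ℤ (W →₀ ℤ) :=
  Finsupp.lsum ℤ fun w =>
    if cs.length (w * cs.simple i) < cs.length w then Finsupp.lsingle (w * cs.simple i) else 0

lemma isReduced_tail' {B W : Type*} [Group W] {M : CoxeterMatrix B}
    {cs : CoxeterSystem M W} {i : B} {l : List B} (h : cs.IsReduced (i :: l)) :
    cs.IsReduced l := by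
  have h1 : cs.length (cs.wordProd l) ≤ l.length := cs.length_wordProd_le l
  have h2 := cs.length_simple_mul (cs.wordProd l) i
  rw [CoxeterSystem.IsReduced, cs.wordProd_cons] at h
  rw [CoxeterSystem.IsReduced]
  simp only [List.length_cons] at h
  omega

lemma partial_single {B W : Type*} [Group W] (M : CoxeterMatrix B)
    (cs : CoxeterSystem M W) (i : B) (u : W) :
    partial' M cs i (Finsupp.single u (1 : ℤ)) =
      if cs.length (u * cs.simple i) < cs.length u
      then Finsupp.single (u * cs.simple i) 1 else 0 := by
  rw [partial', Finsupp.lsum_single]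
  split <;> simp

lemma martial_single {B W : Type*} [Group W] (M : CoxeterMatrix B)
    (cs : CoxeterSystem M W) (i : B) (u : W) :
    martial M cs i (Finsupp.single u (1 : ℤ)) =
      if cs.length (cs.simple i * u) < cs.length u
      then Finsupp.single (cs.simple i * u) 1 else 0 := by
  rw [martial, Finsupp.lsum_single]
  split <;> simp

lemma partial_chain {B W : Type*} [Group W] (M : CoxeterMatrix B)
    (cs : CoxeterSystem M W) (l : List B) (hred : cs.IsReduced l) (σ : W) :
    (l.map (partial' M cs)).prod (Finsupp.single σ (1 : ℤ)) =
      if cs.length (σ * (cs.wordProd l)⁻¹) + l.length = cs.length σ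
      then Finsupp.single (σ * (cs.wordProd l)⁻¹) 1 else 0 := by
  induction l with
  | nil => simp
  | cons i l ih =>
    have hredl : cs.IsReduced l := isReduced_tail' hred
    rw [List.map_cons, List.prod_cons, Module.End.mul_apply, ih hredl]
    have hkey : σ * (cs.wordProd (i :: l))⁻¹ = σ * (cs.wordProd l)⁻¹ * cs.simple i := by
      rw [cs.wordProd_cons, mul_inv_rev, cs.inv_simple, mul_assoc]
    set u := σ * (cs.wordProd l)⁻¹ with hu
    by_cases h : cs.length u + l.length = cs.length σ
    · rw [if_pos h, partial_single, hkey]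
      have hd := cs.length_mul_simple u i
      by_cases h2 : cs.length (u * cs.simple i) < cs.length u
      · rw [if_pos h2, if_pos (by simp only [List.length_cons]; omega)]
      · rw [if_neg h2, if_neg (by simp only [List.length_cons]; omega)]
    · rw [if_neg h, map_zero, hkey]
      have hle : cs.length σ ≤ cs.length u + l.length := by
        have := cs.length_mul_le u (cs.wordProd l)
        rw [hu, inv_mul_cancel_right] at this
        rw [hredl] at this
        exact this
      have hd := cs.length_mul_simple u i
      rw [if_neg (by simp only [List.length_cons]; omega)]

lemma martial_chain {B W : Type*} [Group W] (M : CoxeterMatrix B)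
    (cs : CoxeterSystem M W) (l : List B) (hred : cs.IsReduced l) (σ : W) :
    (l.map (martial M cs)).prod (Finsupp.single σ (1 : ℤ)) =
      if cs.length (cs.wordProd l * σ) + l.length = cs.length σ
      then Finsupp.single (cs.wordProd l * σ) 1 else 0 := by
  induction l with
  | nil => simp
  | cons i l ih =>
    have hredl : cs.IsReduced l := isReduced_tail' hred
    rw [List.map_cons, List.prod_cons, Module.End.mul_apply, ih hredl]
    have hkey : cs.wordProd (i :: l) * σ = cs.simple i * (cs.wordProd l * σ) := by
      rw [cs.wordProd_cons, mul_assoc]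
    set u := cs.wordProd l * σ with hu
    by_cases h : cs.length u + l.length = cs.length σ
    · rw [if_pos h, martial_single, hkey]
      have hd := cs.length_simple_mul u i
      by_cases h2 : cs.length (cs.simple i * u) < cs.length u
      · rw [if_pos h2, if_pos (by simp only [List.length_cons]; omega)]
      · rw [if_neg h2, if_neg (by simp only [List.length_cons]; omega)]
    · rw [if_neg h, map_zero, hkey]
      have hle : cs.length σ ≤ cs.length u + l.length := by
        have h5 := cs.length_mul_le (cs.wordProd l)⁻¹ u
        rw [cs.length_inv, hredl] at h5
        have h6 : (cs.wordProd l)⁻¹ * u = σ := by rw [hu]; group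
        rw [h6] at h5; omega
      have hd := cs.length_simple_mul u i
      rw [if_neg (by simp only [List.length_cons]; omega)]

/-- The coefficient of `δ_e` in `μ_π (∂_ρ δ_σ)` is `1` if `σ = π⁻¹ρ` and
`ℓ(σ) = ℓ(π) + ℓ(ρ)`, and `0` otherwise.  Here `μ_π` and `∂_ρ` are the composites of the
martial resp. divided difference operators along any reduced words for `π` resp. `ρ`
(last letter applied first). -/
theorem coeff_one_martial_partial
    {B W : Type*} [Group W] (M : CoxeterMatrix B) (cs : CoxeterSystem M W)
    (π ρ σ : W) (lπ lρ : List B)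
    (hπred : cs.IsReduced lπ) (hπ : cs.wordProd lπ = π)
    (hρred : cs.IsReduced lρ) (hρ : cs.wordProd lρ = ρ) :
    ((lπ.map (martial M cs)).prod ((lρ.map (partial' M cs)).prod (Finsupp.single σ (1 : ℤ)))) 1
      = if σ = π⁻¹ * ρ ∧ cs.length σ = cs.length π + cs.length ρ then 1 else 0 := by
  have hlπ : lπ.length = cs.length π := by rw [← hπ]; exact hπred.symm
  have hlρ : lρ.length = cs.length ρ := by rw [← hρ]; exact hρred.symm
  rw [partial_chain M cs lρ hρred σ, hρ]
  by_cases h1 : cs.length (σ * ρ⁻¹) + lρ.length = cs.length σ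
  · rw [if_pos h1, martial_chain M cs lπ hπred _, hπ]
    by_cases h2 : cs.length (π * (σ * ρ⁻¹)) + lπ.length = cs.length (σ * ρ⁻¹)
    · rw [if_pos h2]
      by_cases h3 : π * (σ * ρ⁻¹) = 1
      · have hσ : σ = π⁻¹ * ρ := by
          have h4 : σ * ρ⁻¹ = π⁻¹ := eq_inv_of_mul_eq_one_right h3
          calc σ = σ * ρ⁻¹ * ρ := by group
            _ = π⁻¹ * ρ := by rw [h4]
        have hlen : cs.length σ = cs.length π + cs.length ρ := by
          have : cs.length (π * (σ * ρ⁻¹)) = 0 := by rw [h3, cs.length_one]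
          omega
        rw [h3, if_pos ⟨hσ, hlen⟩, Finsupp.single_eq_same]
      · rw [Finsupp.single_apply, if_neg h3, if_neg]
        rintro ⟨hσ, hlen⟩
        apply h3
        rw [hσ]; group
    · rw [if_neg h2, Finsupp.coe_zero, Pi.zero_apply, if_neg]
      rintro ⟨hσ, hlen⟩
      apply h2
      have hσρ : σ * ρ⁻¹ = π⁻¹ := by rw [hσ]; group
      have : π * (σ * ρ⁻¹) = 1 := by rw [hσρ]; group
      rw [this, cs.length_one, hσρ, cs.length_inv]
      omega
  · rw [if_neg h1, map_zero, Finsupp.coe_zero, Pi.zero_apply, if_neg]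
    rintro ⟨hσ, hlen⟩
    apply h1
    have hσρ : σ * ρ⁻¹ = π⁻¹ := by rw [hσ]; group
    rw [hσρ, cs.length_inv]
    omega
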